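/- Let (u,v,w) be a solution of the Neumann–Moser system of dimension n whose coordinate functions are three times differentiable, and set Γ(t) = w₁(t) − u₁(t). Then for all t: u̇₁ = −(1/2)·Γ̇; u̇_{i+1} = (1/4)·u_i′′′ − Γ·u̇_i − (1/2)·Γ̇·u_i for all 1 ≤ i ≤ n−1; and u_n′′′ − 4Γ·u̇_n − 2Γ̇·u_n = 0. (Thus, with the Lenard operator Λ[Γ] = (1/4)∂² − Γ − (1/2)Γ̇∂⁻¹, the functions u₁,…,u_n satisfy the stationary Korteweg–de Vries recursion u̇_{i+1} = Λ[Γ]u̇_i with Λ[Γ]u̇_n = 0.) -/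

import Mathlib

/-!
Comparing coefficients of `ξ` in the three equations gives, with `u_{n+1} = v_{n+1} = 0`,
`u̇ᵢ = -2vᵢ`, `v̇ᵢ = -Γuᵢ - u_{i+1} + w_{i+1}`, `ẇ₁ = 2v₁` and `ẇ_{i+1} = 2v_{i+1} + 2Γvᵢ`.
Hence `Γ̇ = ẇ₁ - u̇₁ = -2u̇₁`. Solving the second relation for `w_{i+1}`, differentiating it and
inserting the result into the fourth eliminates `w`; after `vᵢ = -u̇ᵢ/2` this is the Lenard
recursion, whose step `i = n` is `Λ[Γ]u̇ₙ = 0`.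
-/

open Finset Polynomial

noncomputable def descPoly {R : Type*} [Semiring R] (m : ℕ) (a : ℕ → R) : R[X] :=
  ∑ i ∈ Icc 1 m, C (a i) * X ^ (m - i)

section Coefficients

variable {R : Type*}

theorem eval_descPoly [CommSemiring R] (m : ℕ) (a : ℕ → R) (x : R) :
    (descPoly m a).eval x = ∑ i ∈ Icc 1 m, a i * x ^ (m - i) := by
  simp [descPoly, eval_finsetSum]

theorem coeff_descPoly [Semiring R] (m : ℕ) (a : ℕ → R) (k : ℕ) :
    (descPoly m a).coeff k = if k < m then a (m - k) else 0 := by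
  have hcond : ∀ i ∈ Icc 1 m, (k = m - i ↔ i = m - k) := fun i hi => by
    rw [mem_Icc] at hi; omega
  have hmem : m - k ∈ Icc 1 m ↔ k < m := by rw [mem_Icc]; omega
  simp only [descPoly, finsetSum_coeff, coeff_C_mul_X_pow]
  rw [sum_congr rfl fun i hi => if_congr (hcond i hi) rfl rfl, sum_ite_eq', if_congr hmem rfl rfl]

theorem eq_of_descPoly_eq [Semiring R] {m : ℕ} {a b : ℕ → R} (h : descPoly m a = descPoly m b)
    {i : ℕ} (hi : 1 ≤ i) (him : i ≤ m) : a i = b i := by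
  have := congrArg (coeff · (m - i)) h
  simpa only [coeff_descPoly, if_pos (show m - i < m by omega), Nat.sub_sub_self him] using this

theorem eq_of_descPoly_eq_neg_X_add_C_mul [CommRing R] {n : ℕ} {a u w : ℕ → R} {γ : R}
    (h : descPoly n a = -(X + C γ) * (X ^ n + descPoly n u) + X ^ (n + 1) + descPoly (n + 1) w)
    {i : ℕ} (hi : 1 ≤ i) (hin : i ≤ n) :
    a i = -(γ * u i) - (if i < n then u (i + 1) else 0) + w (i + 1) := by
  obtain ⟨j, rfl⟩ : ∃ j, i = j + 1 := ⟨i - 1, by omega⟩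
  obtain ⟨k, rfl⟩ : ∃ k, n = j + 1 + k := ⟨n - (j + 1), by omega⟩
  have hk := congrArg (coeff · k) h
  rcases k with _ | k
  · simpa [add_mul, coeff_descPoly, sub_eq_add_neg] using hk
  · simpa [add_mul, coeff_descPoly, sub_eq_add_neg, show j + 1 + (k + 1) - k = j + 2 by omega,
      show k < j + 1 + (k + 1) by omega, show k ≠ j + 1 + (k + 1) by omega] using hk

theorem eq_one_of_descPoly_eq_X_add_C_mul [CommRing R] {n : ℕ} {a v : ℕ → R} {γ : R}
    (h : descPoly (n + 1) a = C 2 * (X + C γ) * descPoly n v) (hn : 1 ≤ n) :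
    a 1 = 2 * v 1 := by
  obtain ⟨k, rfl⟩ : ∃ k, n = k + 1 := ⟨n - 1, by omega⟩
  have hk := congrArg (coeff · (k + 1)) h
  simpa [mul_add, add_mul, mul_assoc, coeff_descPoly] using hk

theorem eq_succ_of_descPoly_eq_X_add_C_mul [CommRing R] {n : ℕ} {a v : ℕ → R} {γ : R}
    (h : descPoly (n + 1) a = C 2 * (X + C γ) * descPoly n v) {i : ℕ} (hi : 1 ≤ i) (hin : i ≤ n) :
    a (i + 1) = 2 * (if i < n then v (i + 1) else 0) + 2 * γ * v i := by
  obtain ⟨j, rfl⟩ : ∃ j, i = j + 1 := ⟨i - 1, by omega⟩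
  obtain ⟨k, rfl⟩ : ∃ k, n = j + 1 + k := ⟨n - (j + 1), by omega⟩
  have hk := congrArg (coeff · k) h
  rcases k with _ | k
  · simpa [mul_add, add_mul, mul_assoc, coeff_descPoly] using hk
  · simpa [mul_add, add_mul, mul_assoc, coeff_descPoly, show j + 1 + (k + 1) - k = j + 2 by omega,
      show k < j + 1 + (k + 1) by omega] using hk

end Coefficients

section Derivatives

variable {𝕜 𝔸 : Type*} [NontriviallyNormedField 𝕜] [NormedField 𝔸] [NormedAlgebra 𝕜 𝔸]

theorem hasDerivAt_eval_descPoly {m : ℕ} {c : ℕ → 𝕜 → 𝔸} {t : 𝕜}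
    (hc : ∀ i ∈ Icc 1 m, DifferentiableAt 𝕜 (c i) t) (x : 𝔸) :
    HasDerivAt (fun s => (descPoly m (c · s)).eval x)
      ((descPoly m (fun i => deriv (c i) t)).eval x) t := by
  simp only [eval_descPoly]
  exact HasDerivAt.fun_sum fun i hi => (hc i hi).hasDerivAt.mul_const _

theorem descPoly_deriv_eq_of_eval [Infinite 𝔸] {m : ℕ} {c : ℕ → 𝕜 → 𝔸} {F : 𝕜 → 𝔸 → 𝔸}
    {p : 𝔸 → 𝔸} {Q : 𝔸[X]} {t : 𝕜} (hc : ∀ i ∈ Icc 1 m, DifferentiableAt 𝕜 (c i) t)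
    (hF : ∀ s x, F s x = p x + ∑ i ∈ Icc 1 m, c i s * x ^ (m - i))
    (hQ : ∀ x, deriv (fun s => F s x) t = Q.eval x) :
    descPoly m (fun i => deriv (c i) t) = Q := by
  refine Polynomial.funext fun x => ?_
  simp only [← hQ, hF, ← eval_descPoly]
  exact ((hasDerivAt_eval_descPoly hc x).const_add (p x)).deriv.symm

end Derivatives

theorem lenard_recursion_step {a b v c w Γ : ℝ → ℂ} (ha : Differentiable ℝ a)
    (hb : Differentiable ℝ b) (hv : Differentiable ℝ (deriv v)) (hΓ : Differentiable ℝ Γ)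
    (ha' : ∀ t, deriv a t = -2 * v t) (hb' : ∀ t, deriv b t = -2 * c t)
    (hv' : ∀ t, deriv v t = -(Γ t * a t) - b t + w t)
    (hw' : ∀ t, deriv w t = 2 * c t + 2 * Γ t * v t) (t : ℝ) :
    deriv b t = 1 / 4 * deriv (deriv (deriv a)) t - Γ t * deriv a t
      - 1 / 2 * deriv Γ t * a t := by
  have hw : w = fun s => deriv v s + b s + Γ s * a s := funext fun s => by
    linear_combination -hv' s
  have hw'' : deriv w t = deriv (deriv v) t + deriv b t
      + (deriv Γ t * a t + Γ t * deriv a t) := by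
    rw [hw]
    exact (((hv t).hasDerivAt.add (hb t).hasDerivAt).add
      ((hΓ t).hasDerivAt.mul (ha t).hasDerivAt)).deriv
  have ha''' : deriv (deriv (deriv a)) t = -2 * deriv (deriv v) t := by
    simp only [funext ha', deriv_const_mul_field']
  linear_combination (1 / 2 : ℂ) * (hw' t - hw'') - (1 / 4 : ℂ) * ha''' + (1 / 2 : ℂ) * hb' t
    + (Γ t / 2) * ha' t

theorem lenard_recursion_of_coeff_eqs {n : ℕ} (hn : 1 ≤ n) {u v w : ℕ → ℝ → ℂ} {Γ : ℝ → ℂ}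
    (hu : ∀ i, 1 ≤ i → i ≤ n → Differentiable ℝ (u i))
    (hv : ∀ i, 1 ≤ i → i ≤ n → Differentiable ℝ (deriv (v i)))
    (hw : Differentiable ℝ (w 1)) (hΓ : ∀ t, Γ t = w 1 t - u 1 t)
    (du : ∀ i, 1 ≤ i → i ≤ n → ∀ t, deriv (u i) t = -2 * v i t)
    (dv : ∀ i, 1 ≤ i → i ≤ n → ∀ t,
      deriv (v i) t = -(Γ t * u i t) - (if i < n then u (i + 1) t else 0) + w (i + 1) t)
    (dw_one : ∀ t, deriv (w 1) t = 2 * v 1 t)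
    (dw : ∀ i, 1 ≤ i → i ≤ n → ∀ t,
      deriv (w (i + 1)) t = 2 * (if i < n then v (i + 1) t else 0) + 2 * Γ t * v i t) :
    (∀ t : ℝ, deriv (u 1) t = -(1 / 2) * deriv Γ t)
    ∧ (∀ i, 1 ≤ i → i ≤ n - 1 → ∀ t : ℝ,
        deriv (u (i + 1)) t = (1 / 4) * deriv (deriv (deriv (u i))) t
          - Γ t * deriv (u i) t - (1 / 2) * deriv Γ t * u i t)
    ∧ (∀ t : ℝ,
        deriv (deriv (deriv (u n))) t - 4 * Γ t * deriv (u n) t - 2 * deriv Γ t * u n t = 0) := by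
  have hΓd : Differentiable ℝ Γ := funext hΓ ▸ hw.sub (hu 1 le_rfl hn)
  refine ⟨fun t => ?_, fun i hi hin t => ?_, fun t => ?_⟩
  · have hΓ' : deriv Γ t = deriv (w 1) t - deriv (u 1) t := by
      rw [funext hΓ]
      exact deriv_sub (hw t) (hu 1 le_rfl hn t)
    rw [hΓ', dw_one, du 1 le_rfl hn]
    ring
  · exact lenard_recursion_step (c := v (i + 1)) (hu i hi (by omega))
      (hu (i + 1) (by omega) (by omega)) (hv i hi (by omega)) hΓd (du i hi (by omega))
      (du (i + 1) (by omega) (by omega))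
      (fun t => by rw [dv i hi (by omega) t, if_pos (by omega)])
      (fun t => by rw [dw i hi (by omega) t, if_pos (by omega)]) t
  · have h := lenard_recursion_step (b := 0) (c := 0) (w := w (n + 1)) (hu n hn le_rfl)
      (differentiable_const 0) (hv n hn le_rfl) hΓd (du n hn le_rfl) (by simp)
      (fun t => by simp [dv n hn le_rfl t]) (fun t => by simp [dw n hn le_rfl t]) t
    simp only [Pi.zero_def, deriv_const] at h
    linear_combination -4 * h

/-- Along a solution of the Neumann–Moser system, the functions `u₁, …, u_n` satisfy the
stationary Korteweg–de Vries (Lenard) recursion for `Γ = w₁ − u₁`: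
`u̇₁ = −(1/2)Γ̇`, `u̇_{i+1} = (1/4)u_i''' − Γu̇_i − (1/2)Γ̇u_i` for `1 ≤ i ≤ n−1`, and
`u_n''' − 4Γu̇_n − 2Γ̇u_n = 0`. -/
theorem neumann_moser_kdv_recursion (n : ℕ) (hn : 1 ≤ n)
    (u v w : ℕ → ℝ → ℂ)
    (hu : ∀ i ∈ Finset.Icc 1 n, Differentiable ℝ (u i) ∧ Differentiable ℝ (deriv (u i))
        ∧ Differentiable ℝ (deriv (deriv (u i))))
    (hv : ∀ i ∈ Finset.Icc 1 n, Differentiable ℝ (v i) ∧ Differentiable ℝ (deriv (v i))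
        ∧ Differentiable ℝ (deriv (deriv (v i))))
    (hw : ∀ i ∈ Finset.Icc 1 (n + 1), Differentiable ℝ (w i) ∧ Differentiable ℝ (deriv (w i))
        ∧ Differentiable ℝ (deriv (deriv (w i))))
    (U V W : ℝ → ℂ → ℂ)
    (hU : ∀ t ξ, U t ξ = ξ ^ n + ∑ i ∈ Finset.Icc 1 n, u i t * ξ ^ (n - i))
    (hV : ∀ t ξ, V t ξ = ∑ i ∈ Finset.Icc 1 n, v i t * ξ ^ (n - i))
    (hW : ∀ t ξ, W t ξ = ξ ^ (n + 1) + ∑ i ∈ Finset.Icc 1 (n + 1), w i t * ξ ^ (n + 1 - i))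
    (hUt : ∀ ξ t, deriv (fun s => U s ξ) t = -2 * V t ξ)
    (hVt : ∀ ξ t, deriv (fun s => V s ξ) t = -(ξ + w 1 t - u 1 t) * U t ξ + W t ξ)
    (hWt : ∀ ξ t, deriv (fun s => W s ξ) t = 2 * (ξ + w 1 t - u 1 t) * V t ξ)
    (Γ : ℝ → ℂ) (hΓ : ∀ t, Γ t = w 1 t - u 1 t) :
    (∀ t : ℝ, deriv (u 1) t = -(1 / 2) * deriv Γ t)
    ∧ (∀ i, 1 ≤ i → i ≤ n - 1 → ∀ t : ℝ,
        deriv (u (i + 1)) t = (1 / 4) * deriv (deriv (deriv (u i))) t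
          - Γ t * deriv (u i) t - (1 / 2) * deriv Γ t * u i t)
    ∧ (∀ t : ℝ,
        deriv (deriv (deriv (u n))) t - 4 * Γ t * deriv (u n) t - 2 * deriv Γ t * u n t = 0) := by
  have hU' : ∀ t, descPoly n (fun i => deriv (u i) t) = descPoly n (fun i => -2 * v i t) :=
    fun t => descPoly_deriv_eq_of_eval (fun i hi => (hu i hi).1 t) hU fun ξ => by
      simp [hUt, hV, eval_descPoly, mul_sum, mul_assoc]
  have hV' : ∀ t, descPoly n (fun i => deriv (v i) t)
      = -(X + C (Γ t)) * (X ^ n + descPoly n (u · t)) + X ^ (n + 1) + descPoly (n + 1) (w · t) :=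
    fun t => descPoly_deriv_eq_of_eval (F := V) (p := 0) (fun i hi => (hv i hi).1 t)
      (by simpa using hV) fun ξ => by
        simp only [hVt, hU, hW, hΓ, eval_add, eval_mul, eval_neg, eval_pow, eval_X, eval_C,
          eval_descPoly]
        ring
  have hW' : ∀ t, descPoly (n + 1) (fun i => deriv (w i) t)
      = C 2 * (X + C (Γ t)) * descPoly n (v · t) :=
    fun t => descPoly_deriv_eq_of_eval (fun i hi => (hw i hi).1 t) hW fun ξ => by
      simp only [hWt, hV, hΓ, eval_add, eval_mul, eval_X, eval_C, eval_descPoly]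
      ring
  exact lenard_recursion_of_coeff_eqs hn (fun i hi hin => (hu i (mem_Icc.2 ⟨hi, hin⟩)).1)
    (fun i hi hin => (hv i (mem_Icc.2 ⟨hi, hin⟩)).2.1) (hw 1 (mem_Icc.2 ⟨le_rfl, by omega⟩)).1 hΓ
    (fun i hi hin t => eq_of_descPoly_eq (hU' t) hi hin)
    (fun i hi hin t => eq_of_descPoly_eq_neg_X_add_C_mul (hV' t) hi hin)
    (fun t => eq_one_of_descPoly_eq_X_add_C_mul (hW' t) hn)
    (fun i hi hin t => eq_succ_of_descPoly_eq_X_add_C_mul (hW' t) hi hin)
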